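/- Let α ∈ (0,1] and let μ be a probability distribution on the k-element subsets of [n] that is α-fractionally log-concave, i.e., (z₁,…,zₙ) ↦ log g_μ(z₁^α,…,zₙ^α) is concave on ℝ^n_{>0}. Then μ is (1/α)-entropically independent: for every probability distribution ν on the k-element subsets of [n] with supp(ν) ⊆ supp(μ), D(ν D_{k→1} ‖ μ D_{k→1}) ≤ (1/(αk))·D(ν ‖ μ). -/

import Mathlib

open Finset

/-- The generating polynomial `g_μ(z) = ∑_S μ(S) ∏_{i∈S} z_i`. -/
noncomputable def genPoly {n : ℕ} (μ : Finset (Fin n) → ℝ) (z : Fin n → ℝ) : ℝ :=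
  ∑ S : Finset (Fin n), μ S * ∏ i ∈ S, z i

/-- The `k → 1` down operator: `(ν D_{k→1})(i) = (1/k) ∑_{S ∋ i} ν(S)`. -/
noncomputable def down1 {n : ℕ} (k : ℕ) (ν : Finset (Fin n) → ℝ) (i : Fin n) : ℝ :=
  (1 / (k : ℝ)) * ∑ S ∈ Finset.univ.filter (fun S => i ∈ S), ν S

/-- KL divergence `D(ν ‖ μ) = ∑_x ν(x) log (ν(x)/μ(x))` on a finite type. -/
noncomputable def KLdiv {X : Type*} [Fintype X] (ν μ : X → ℝ) : ℝ :=
  ∑ x : X, ν x * Real.log (ν x / μ x)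

/-! For every `y > 0`, the Donsker–Varadhan inequality applied to the tilt of `μ` by
`S ↦ ∏_{i ∈ S} y_i ^ α` gives `D(ν ‖ μ) ≥ α k ∑ᵢ qᵢ log yᵢ - log g_μ(y ^ α)`, where
`q = ν D_{k→1}` and `p = μ D_{k→1}`. Fractional log-concavity bounds `log g_μ(y ^ α)` by its
tangent at `y = 1`, namely `α k (⟨p, y⟩ - 1)`. Optimizing over `y` (at `y = q / p`) turns the
resulting lower bound into `α k D(q ‖ p)`. -/

open Real

theorem sum_mul_sub_log_sum_mul_exp_le_KLdiv {X : Type*} [Fintype X] {ν μ : X → ℝ}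
    (hν0 : ∀ x, 0 ≤ ν x) (hν1 : ∑ x, ν x = 1) (hμ0 : ∀ x, 0 ≤ μ x)
    (hνμ : ∀ x, μ x = 0 → ν x = 0) (f : X → ℝ) :
    ∑ x, ν x * f x - log (∑ x, μ x * exp (f x)) ≤ KLdiv ν μ := by
  set Z := ∑ x, μ x * exp (f x)
  have hZ : 0 < Z := by
    obtain ⟨x, -, hx⟩ := exists_ne_zero_of_sum_ne_zero (hν1 ▸ one_ne_zero)
    exact sum_pos' (fun x _ => mul_nonneg (hμ0 x) (exp_pos _).le)
      ⟨x, mem_univ _, mul_pos ((hμ0 x).lt_of_ne' (mt (hνμ x) hx)) (exp_pos _)⟩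
  have hterm : ∀ x, ν x * (f x - log Z - log (ν x / μ x)) ≤ μ x * exp (f x) / Z - ν x := by
    intro x
    rcases (hν0 x).eq_or_lt with hνx | hνx
    · rw [← hνx]
      have := hμ0 x
      simp only [zero_mul, sub_zero]
      positivity
    have hμx : 0 < μ x := (hμ0 x).lt_of_ne' (mt (hνμ x) hνx.ne')
    calc ν x * (f x - log Z - log (ν x / μ x))
        = ν x * log (μ x * exp (f x) / (Z * ν x)) := by
          rw [log_div hνx.ne' hμx.ne', log_div (by positivity) (by positivity),
            log_mul hμx.ne' (exp_pos _).ne', log_mul hZ.ne' hνx.ne', log_exp]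
          ring
      _ ≤ ν x * (μ x * exp (f x) / (Z * ν x) - 1) :=
          mul_le_mul_of_nonneg_left (log_le_sub_one_of_pos (by positivity)) hνx.le
      _ = μ x * exp (f x) / Z - ν x := by field_simp
  have hsum := sum_le_sum fun x (_ : x ∈ univ) => hterm x
  rw [sum_sub_distrib, ← sum_div, div_self hZ.ne', hν1, sub_self] at hsum
  simp only [mul_sub, sum_sub_distrib, ← sum_mul, hν1, one_mul] at hsum
  unfold KLdiv
  linarith

theorem KLdiv_le_of_forall_pos {X : Type*} [Fintype X] {q p : X → ℝ} {B : ℝ}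
    (hq0 : ∀ x, 0 ≤ q x) (hq1 : ∑ x, q x = 1) (hp0 : ∀ x, 0 ≤ p x) (hp1 : ∑ x, p x = 1)
    (hqp : ∀ x, p x = 0 → q x = 0)
    (h : ∀ y : X → ℝ, (∀ x, 0 < y x) → ∑ x, q x * log (y x) - ∑ x, p x * y x + 1 ≤ B) :
    KLdiv q p ≤ B := by
  refine le_of_forall_pos_le_add fun ε hε => ?_
  -- the optimizer `q / p` must be kept positive on the zeros of `q`
  set y : X → ℝ := fun x => if q x = 0 then ε else q x / p x
  have hy : ∀ x, 0 < y x := fun x => by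
    by_cases hqx : q x = 0
    · simpa [y, hqx] using hε
    · have hpx : p x ≠ 0 := mt (hqp x) hqx
      simpa [y, hqx] using div_pos ((hq0 x).lt_of_ne' hqx) ((hp0 x).lt_of_ne' hpx)
  have hlog : ∑ x, q x * log (y x) = KLdiv q p :=
    sum_congr rfl fun x _ => by by_cases hqx : q x = 0 <;> simp [y, hqx]
  have hpy : ∑ x, p x * y x ≤ 1 + ε := calc
    ∑ x, p x * y x ≤ ∑ x, (q x + ε * p x) := sum_le_sum fun x _ => by
      by_cases hqx : q x = 0
      · simp [y, hqx, mul_comm]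
      · simpa [y, hqx, mul_div_cancel₀ _ (mt (hqp x) hqx)] using mul_nonneg hε.le (hp0 x)
    _ = 1 + ε := by rw [sum_add_distrib, ← mul_sum, hq1, hp1, mul_one]
  linarith [h y hy]

theorem ConcaveOn.le_add_of_hasDerivAt_lineMap {E : Type*} [AddCommGroup E] [Module ℝ E]
    {s : Set E} {f : E → ℝ} {x y : E} {D : ℝ} (hf : ConcaveOn ℝ s f) (hx : x ∈ s) (hy : y ∈ s)
    (hD : HasDerivAt (fun t : ℝ => f (AffineMap.lineMap x y t)) D 0) : f y ≤ f x + D := by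
  have hφ := hf.comp_affineMap (AffineMap.lineMap x y)
  have := hφ.slope_le_of_hasDerivAt (x := 0) (y := 1) (by simpa using hx) (by simpa using hy)
    one_pos hD
  simp only [slope_def_field, Function.comp_apply, AffineMap.lineMap_apply_one,
    AffineMap.lineMap_apply_zero, sub_zero, div_one] at this
  linarith

theorem sum_mul_sum_eq_mul_sum_down1 {n k : ℕ} (hk : k ≠ 0) (ν : Finset (Fin n) → ℝ)
    (c : Fin n → ℝ) : ∑ S, ν S * ∑ i ∈ S, c i = k * ∑ i, down1 k ν i * c i := by
  have hk' : (k : ℝ) ≠ 0 := Nat.cast_ne_zero.mpr hk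
  simp_rw [mul_sum, down1, ← mul_assoc, mul_one_div_cancel hk', one_mul, sum_mul]
  exact sum_comm' fun S i => by simp

theorem down1_nonneg {n : ℕ} (k : ℕ) {ν : Finset (Fin n) → ℝ} (hν0 : ∀ S, 0 ≤ ν S) (i : Fin n) :
    0 ≤ down1 k ν i :=
  mul_nonneg (by positivity) (sum_nonneg fun S _ => hν0 S)

theorem sum_down1 {n k : ℕ} (hk : k ≠ 0) {ν : Finset (Fin n) → ℝ}
    (hνk : ∀ S, ν S ≠ 0 → S.card = k) (hν1 : ∑ S, ν S = 1) : ∑ i, down1 k ν i = 1 := by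
  have hcount := sum_mul_sum_eq_mul_sum_down1 hk ν fun _ => 1
  have hcard : ∀ S, ν S * ∑ _i ∈ S, (1 : ℝ) = k * ν S := fun S => by
    by_cases h : ν S = 0
    · simp [h]
    · simp [hνk S h, mul_comm]
  simp only [hcard, ← mul_sum, hν1, mul_one] at hcount
  exact (mul_eq_left₀ (Nat.cast_ne_zero.mpr hk)).mp hcount.symm

theorem down1_eq_zero_of_down1_eq_zero {n k : ℕ} {μ ν : Finset (Fin n) → ℝ}
    (hμ0 : ∀ S, 0 ≤ μ S) (hνμ : ∀ S, μ S = 0 → ν S = 0) {i : Fin n} (h : down1 k μ i = 0) :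
    down1 k ν i = 0 := by
  unfold down1 at *
  rcases mul_eq_zero.mp h with h | h
  · rw [h, zero_mul]
  · rw [sum_eq_zero_iff_of_nonneg fun S _ => hμ0 S] at h
    rw [sum_eq_zero fun S hS => hνμ S (h S hS), mul_zero]

theorem hasDerivAt_genPoly_rpow_one_add_mul {n : ℕ} (μ : Finset (Fin n) → ℝ) (α : ℝ)
    (d : Fin n → ℝ) :
    HasDerivAt (fun t : ℝ => genPoly μ fun i => (1 + t * d i) ^ α)
      (α * ∑ S, μ S * ∑ i ∈ S, d i) 0 := by
  have hfactor : ∀ i, HasDerivAt (fun t : ℝ => (1 + t * d i) ^ α) (α * d i) 0 := fun i => by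
    simpa [mul_comm] using
      (((hasDerivAt_id (0 : ℝ)).mul_const (d i)).const_add 1).rpow_const (p := α) (by simp)
  have hsum := HasDerivAt.fun_sum fun S (_ : S ∈ univ) =>
    (HasDerivAt.fun_finsetProd fun i (_ : i ∈ S) => hfactor i).const_mul (μ S)
  unfold genPoly
  refine hsum.congr_deriv ?_
  simp [mul_sum, mul_left_comm]

theorem log_genPoly_rpow_le {n : ℕ} {α : ℝ} {μ : Finset (Fin n) → ℝ} (hμ1 : ∑ S, μ S = 1)
    (hFLC : ConcaveOn ℝ {z : Fin n → ℝ | ∀ i, 0 < z i}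
      (fun z => log (genPoly μ (fun i => z i ^ α))))
    {y : Fin n → ℝ} (hy : ∀ i, 0 < y i) :
    log (genPoly μ fun i => y i ^ α) ≤ α * ∑ S, μ S * ∑ i ∈ S, (y i - 1) := by
  have hg1 : (genPoly μ fun _ => (1 : ℝ)) = 1 := by simp [genPoly, hμ1]
  have hline : ∀ t : ℝ, AffineMap.lineMap (1 : Fin n → ℝ) y t = fun i => 1 + t * (y i - 1) :=
    fun t => by ext i; simp [AffineMap.lineMap_apply]; ring
  have hD := (hasDerivAt_genPoly_rpow_one_add_mul μ α fun i => y i - 1).log (by simp [hg1])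
  simp only [zero_mul, add_zero, one_rpow, hg1, div_one] at hD
  have := hFLC.le_add_of_hasDerivAt_lineMap (x := 1) (fun _ => one_pos) hy
    (by simpa only [hline] using hD)
  simpa [hg1] using this

theorem mul_sum_down1_log_sub_le_KLdiv {n k : ℕ} (hk : k ≠ 0) {α : ℝ}
    {μ ν : Finset (Fin n) → ℝ} (hμ0 : ∀ S, 0 ≤ μ S) (hμk : ∀ S, μ S ≠ 0 → S.card = k)
    (hμ1 : ∑ S, μ S = 1)
    (hFLC : ConcaveOn ℝ {z : Fin n → ℝ | ∀ i, 0 < z i}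
      (fun z => log (genPoly μ (fun i => z i ^ α))))
    (hν0 : ∀ S, 0 ≤ ν S) (hν1 : ∑ S, ν S = 1) (hνμ : ∀ S, μ S = 0 → ν S = 0)
    {y : Fin n → ℝ} (hy : ∀ i, 0 < y i) :
    α * k * (∑ i, down1 k ν i * log (y i) - ∑ i, down1 k μ i * y i + 1) ≤ KLdiv ν μ := by
  have hDV := sum_mul_sub_log_sum_mul_exp_le_KLdiv hν0 hν1 hμ0 hνμ
    fun S => α * ∑ i ∈ S, log (y i)
  have hexp : ∀ S : Finset (Fin n), exp (α * ∑ i ∈ S, log (y i)) = ∏ i ∈ S, y i ^ α :=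
    fun S => by
      rw [mul_sum, exp_sum]
      exact prod_congr rfl fun i _ => by rw [rpow_def_of_pos (hy i), mul_comm]
  have hν : ∑ S, ν S * (α * ∑ i ∈ S, log (y i)) = α * (k * ∑ i, down1 k ν i * log (y i)) := by
    rw [← sum_mul_sum_eq_mul_sum_down1 hk, mul_sum]
    exact sum_congr rfl fun S _ => by ring
  have hμ : ∑ S, μ S * ∑ i ∈ S, (y i - 1) = k * (∑ i, down1 k μ i * y i - 1) := by
    rw [sum_mul_sum_eq_mul_sum_down1 hk]
    simp only [mul_sub, mul_one, sum_sub_distrib, sum_down1 hk hμk hμ1]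
  have hlog := log_genPoly_rpow_le hμ1 hFLC hy
  simp only [hexp, hν] at hDV
  rw [hμ] at hlog
  unfold genPoly at hlog
  linarith

theorem stmt_4_general (n k : ℕ) (α : ℝ) (hα0 : 0 < α)
    (μ : Finset (Fin n) → ℝ)
    (hμ0 : ∀ S, 0 ≤ μ S)
    (hμk : ∀ S, μ S ≠ 0 → S.card = k)
    (hμ1 : ∑ S : Finset (Fin n), μ S = 1)
    (hFLC : ConcaveOn ℝ {z : Fin n → ℝ | ∀ i, 0 < z i}
      (fun z => Real.log (genPoly μ (fun i => z i ^ α)))) :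
    ∀ ν : Finset (Fin n) → ℝ,
      (∀ S, 0 ≤ ν S) → (∀ S, ν S ≠ 0 → S.card = k) →
      (∑ S : Finset (Fin n), ν S = 1) → (∀ S, μ S = 0 → ν S = 0) →
      KLdiv (down1 k ν) (down1 k μ) ≤ (1 / (α * (k : ℝ))) * KLdiv ν μ := by
  intro ν hν0 hνk hν1 hνμ
  rcases eq_or_ne k 0 with rfl | hk
  · simp [down1, KLdiv]
  have hαk : 0 < α * k := by positivity
  rw [one_div_mul_eq_div]
  refine KLdiv_le_of_forall_pos (down1_nonneg k hν0) (sum_down1 hk hνk hν1)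
    (down1_nonneg k hμ0) (sum_down1 hk hμk hμ1)
    (fun _ => down1_eq_zero_of_down1_eq_zero hμ0 hνμ) fun y hy => ?_
  rw [le_div_iff₀' hαk]
  exact mul_sum_down1_log_sub_le_KLdiv hk hμ0 hμk hμ1 hFLC hν0 hν1 hνμ hy

theorem stmt_4 (n k : ℕ) (α : ℝ) (hα0 : 0 < α) (hα1 : α ≤ 1)
    (μ : Finset (Fin n) → ℝ)
    (hμ0 : ∀ S, 0 ≤ μ S)
    (hμk : ∀ S, μ S ≠ 0 → S.card = k)
    (hμ1 : ∑ S : Finset (Fin n), μ S = 1)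
    (hFLC : ConcaveOn ℝ {z : Fin n → ℝ | ∀ i, 0 < z i}
      (fun z => Real.log (genPoly μ (fun i => z i ^ α)))) :
    ∀ ν : Finset (Fin n) → ℝ,
      (∀ S, 0 ≤ ν S) → (∀ S, ν S ≠ 0 → S.card = k) →
      (∑ S : Finset (Fin n), ν S = 1) → (∀ S, μ S = 0 → ν S = 0) →
      KLdiv (down1 k ν) (down1 k μ) ≤ (1 / (α * (k : ℝ))) * KLdiv ν μ :=
  stmt_4_general n k α hα0 μ hμ0 hμk hμ1 hFLC
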